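/- arXiv:2501.15560 — 2 statements merged into one kernel-verified Lean document; each statement's English description precedes it below -/
import Mathlib

section
/- Let L be a Lie algebra over a field F. If Der(L) is simple, then L is isomorphic to ĝ/C where ĝ is the universal central extension of the simple Lie algebra g = Der(L) and C is a central ideal of ĝ such that every derivation of ĝ preserving C is inner. -/
/-!
Since `Der(L)` is simple, it is perfect and centreless, and `ad : L → Der(L)` is onto: its image
is an ideal, and if it were zero then `L` would be abelian, the identity would be a central
derivation, and so `L = 0`. Hence `L = [L, L] + Z(L)`, and a functional `f` killing `[L, L]` but not a
central `z` would give the nonzero central derivation `x ↦ f x • z`; so `L` is perfect and `ad`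
is a central extension of `Der(L)`. Universality gives `ψ : ĝ → L` over `Der(L)`, which is onto
because `L` is perfect, and `C = ker ψ` is central. A derivation of `ĝ` preserving `C` descends to
`L`, where it is some `ad (ψ v)`; then `D - ad v` has central image, so it vanishes on the perfect
algebra `ĝ`.
-/

open LieAlgebra LieDerivation

namespace LieAlgebra

variable (R L : Type*) [CommRing R] [LieRing L] [LieAlgebra R L]

def IsPerfect : Prop := ⁅(⊤ : LieIdeal R L), (⊤ : LieIdeal R L)⁆ = ⊤

variable {R L}

lemma IsSimple.isPerfect [IsSimple R L] : IsPerfect R L :=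
  (IsSimple.eq_bot_or_eq_top _).resolve_left fun h ↦ IsSimple.non_abelian R (L := L)
    ⟨fun x y ↦ (LieSubmodule.lie_eq_bot_iff _ _).mp h x trivial y trivial⟩

lemma IsPerfect.mem_of_forall_lie_mem (hL : IsPerfect R L) {S : Submodule R L}
    (hS : ∀ a b : L, ⁅a, b⁆ ∈ S) (x : L) : x ∈ S := by
  have hle : (⁅(⊤ : LieIdeal R L), (⊤ : LieIdeal R L)⁆ : LieIdeal R L).toSubmodule ≤ S := by
    rw [LieSubmodule.lieIdeal_oper_eq_linear_span']
    exact Submodule.span_le.mpr (by rintro _ ⟨a, -, b, -, rfl⟩; exact hS a b)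
  exact hle (by rw [hL]; trivial)

lemma IsPerfect.exists_mem_lie_top_of_surjective {L' : Type*} [LieRing L'] [LieAlgebra R L']
    (hL' : IsPerfect R L') (f : L →ₗ⁅R⁆ L') (hf : Function.Surjective f) (y : L') :
    ∃ x ∈ ⁅(⊤ : LieIdeal R L), (⊤ : LieIdeal R L)⁆, f x = y := by
  have hy : y ∈ LieIdeal.map f ⁅(⊤ : LieIdeal R L), (⊤ : LieIdeal R L)⁆ := by
    rw [LieIdeal.map_bracket_eq f hf, ← f.idealRange_eq_map,
      f.idealRange_eq_top_of_surjective hf, hL']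
    trivial
  obtain ⟨⟨x, hx⟩, rfl⟩ := LieIdeal.mem_map_of_surjective hf hy
  exact ⟨x, hx, rfl⟩

lemma lie_eq_lie_of_sub_mem_center {a a' b b' : L} (ha : a - a' ∈ center R L)
    (hb : b - b' ∈ center R L) : ⁅a, b⁆ = ⁅a', b'⁆ := by
  rw [LieModule.mem_maxTrivSubmodule] at ha hb
  have ha' : ⁅a - a', b⁆ = 0 := by rw [← lie_skew, ha, neg_zero]
  rw [← sub_eq_zero, show ⁅a, b⁆ - ⁅a', b'⁆ = ⁅a - a', b⁆ + ⁅a', b - b'⁆ by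
    rw [sub_lie, lie_sub]; abel, ha', hb, add_zero]

end LieAlgebra

namespace LieHom

variable {R K L g : Type*} [CommRing R] [LieRing K] [LieAlgebra R K] [LieRing L] [LieAlgebra R L]
  [LieRing g] [LieAlgebra R g]

lemma surjective_of_isPerfect (hL : IsPerfect R L) (π : L →ₗ⁅R⁆ g) (hπ : π.ker ≤ center R L)
    (ψ : K →ₗ⁅R⁆ L) (h : Function.Surjective (π.comp ψ)) : Function.Surjective ψ := by
  have hlift : ∀ x : L, ∃ u : K, x - ψ u ∈ center R L := fun x ↦ by
    obtain ⟨u, hu⟩ := h (π x)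
    exact ⟨u, hπ (by rw [mem_ker, map_sub, ← comp_apply, hu, sub_self])⟩
  intro x
  refine hL.mem_of_forall_lie_mem (S := LinearMap.range (ψ : K →ₗ[R] L)) (fun a b ↦ ?_) x
  obtain ⟨u, hu⟩ := hlift a
  obtain ⟨v, hv⟩ := hlift b
  exact ⟨⁅u, v⁆, by rw [coe_toLinearMap, map_lie, lie_eq_lie_of_sub_mem_center hu hv]⟩

noncomputable def quotKerEquivOfSurjective (f : K →ₗ⁅R⁆ L) (hf : Function.Surjective f) :
    (K ⧸ f.ker) ≃ₗ⁅R⁆ L :=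
  f.quotKerEquivRange.trans <| LieEquiv.ofBijective f.range.incl
    ⟨Subtype.val_injective, fun y ↦ ⟨⟨y, (f.mem_range y).mpr (hf y)⟩, rfl⟩⟩

end LieHom

namespace LieDerivation

variable {R K L : Type*} [CommRing R] [LieRing K] [LieAlgebra R K] [LieRing L] [LieAlgebra R L]

lemma subsingleton_of_isLieAbelian [IsLieAbelian L]
    (h : center R (LieDerivation R L L) = ⊥) : Subsingleton L := by
  let idDer : LieDerivation R L L := ⟨LinearMap.id, fun a b ↦ by simp [trivial_lie_zero]⟩
  have hid : idDer ∈ center R (LieDerivation R L L) := by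
    rw [LieModule.mem_maxTrivSubmodule]
    intro D
    ext x
    simp [idDer]
  rw [h, LieSubmodule.mem_bot] at hid
  exact ⟨fun x y ↦ (DFunLike.congr_fun hid x).trans (DFunLike.congr_fun hid y).symm⟩

lemma ad_surjective_of_isSimple [IsSimple R (LieDerivation R L L)] :
    Function.Surjective (ad R L) := by
  obtain h | h := IsSimple.eq_bot_or_eq_top (ad R L).idealRange
  · have : IsLieAbelian L := by
      rw [isLieAbelian_iff_center_eq_top R L, ← ad_ker_eq_center, eq_top_iff]
      intro x _
      have hx := (ad R L).mem_idealRange x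
      rwa [h, LieSubmodule.mem_bot, ← LieHom.mem_ker] at hx
    have := subsingleton_of_isLieAbelian (R := R) (center_eq_bot R (LieDerivation R L L))
    have : Subsingleton (LieDerivation R L L) := ⟨fun D E ↦ ext fun x ↦ Subsingleton.elim _ _⟩
    exact absurd ‹IsSimple R (LieDerivation R L L)› (not_isSimple_of_subsingleton R _)
  · exact fun D ↦ mem_ad_idealRange_iff.mp (h ▸ LieSubmodule.mem_top D)

def smulRightOfCenter (f : L →ₗ[R] R) (hf : ∀ a b : L, f ⁅a, b⁆ = 0) {z : L}
    (hz : z ∈ center R L) : LieDerivation R L L :=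
  ⟨f.smulRight z, fun a b ↦ by
    rw [LieModule.mem_maxTrivSubmodule] at hz
    simp [hf, hz]⟩

@[simp]
lemma smulRightOfCenter_apply (f : L →ₗ[R] R) (hf : ∀ a b : L, f ⁅a, b⁆ = 0) {z : L}
    (hz : z ∈ center R L) (x : L) : smulRightOfCenter f hf hz x = f x • z :=
  rfl

lemma smulRightOfCenter_mem_center (had : Function.Surjective (ad R L)) (f : L →ₗ[R] R)
    (hf : ∀ a b : L, f ⁅a, b⁆ = 0) {z : L} (hz : z ∈ center R L) :
    smulRightOfCenter f hf hz ∈ center R (LieDerivation R L L) := by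
  have hadz : ad R L z = 0 := by rwa [← LieHom.mem_ker, ad_ker_eq_center]
  rw [LieModule.mem_maxTrivSubmodule]
  intro D
  obtain ⟨y, rfl⟩ := had D
  rw [← lie_skew, lie_der_ad_eq_ad_der, smulRightOfCenter_apply, map_smul, hadz, smul_zero,
    neg_zero]

lemma eq_zero_of_isPerfect (hL : IsPerfect R L) (D : LieDerivation R L L)
    (hD : ∀ x, D x ∈ center R L) : D = 0 := by
  ext x
  refine hL.mem_of_forall_lie_mem (S := LinearMap.ker (D : L →ₗ[R] L)) (fun a b ↦ ?_) x
  have hDa := hD a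
  have hDb := hD b
  rw [LieModule.mem_maxTrivSubmodule] at hDa hDb
  rw [LinearMap.mem_ker, coeFn_coe, apply_lie_eq_sub, hDa, hDb, sub_zero]

lemma exists_comp_eq_of_surjective (ψ : K →ₗ⁅R⁆ L) (hψ : Function.Surjective ψ)
    (D : LieDerivation R K K) (hD : ∀ x ∈ ψ.ker, D x ∈ ψ.ker) :
    ∃ D' : LieDerivation R L L, ∀ u, D' (ψ u) = ψ (D u) := by
  let ψₗ : K →ₗ[R] L := ψ
  let e := ψₗ.quotKerEquivOfSurjective hψ
  let D₀ : L →ₗ[R] L :=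
    (LinearMap.ker ψₗ).liftQ (ψₗ ∘ₗ (D : K →ₗ[R] K)) (fun x hx ↦ hD x hx) ∘ₗ e.symm.toLinearMap
  have hD₀ : ∀ u, D₀ (ψ u) = ψ (D u) := fun u ↦ by
    have : e.symm (ψ u) = Submodule.Quotient.mk u := by
      rw [LinearEquiv.symm_apply_eq]; rfl
    simp only [D₀, LinearMap.comp_apply, LinearEquiv.coe_coe, this]
    rfl
  refine ⟨⟨D₀, fun a b ↦ ?_⟩, hD₀⟩
  obtain ⟨u, rfl⟩ := hψ a
  obtain ⟨v, rfl⟩ := hψ b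
  rw [← LieHom.map_lie, hD₀, hD₀, hD₀, apply_lie_eq_sub, map_sub, LieHom.map_lie, LieHom.map_lie]

lemma exists_eq_ad_of_ker_le_center (hK : IsPerfect R K) (ψ : K →ₗ⁅R⁆ L)
    (hψ : Function.Surjective ψ) (hcent : ψ.ker ≤ center R K) (had : Function.Surjective (ad R L))
    (D : LieDerivation R K K) (hD : ∀ x ∈ ψ.ker, D x ∈ ψ.ker) : ∃ v, D = ad R K v := by
  obtain ⟨D', hD'⟩ := exists_comp_eq_of_surjective ψ hψ D hD
  obtain ⟨x, rfl⟩ := had D'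
  obtain ⟨v, rfl⟩ := hψ x
  refine ⟨v, sub_eq_zero.mp (eq_zero_of_isPerfect hK _ fun u ↦ hcent ?_)⟩
  rw [LieHom.mem_ker, sub_apply, map_sub, ← hD']
  simp

end LieDerivation

namespace LieAlgebra

variable {F L : Type*} [Field F] [LieRing L] [LieAlgebra F L]

theorem isPerfect_of_ad_surjective (had : Function.Surjective (LieDerivation.ad F L))
    (hZ : center F (LieDerivation F L L) = ⊥) (hDer : IsPerfect F (LieDerivation F L L)) :
    IsPerfect F L := by
  by_contra hL
  obtain ⟨f, hf0, hfI⟩ := Submodule.exists_le_ker_of_lt_top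
    (⁅(⊤ : LieIdeal F L), (⊤ : LieIdeal F L)⁆ : LieIdeal F L).toSubmodule
    (lt_top_iff_ne_top.mpr (by rwa [ne_eq, LieSubmodule.toSubmodule_eq_top]))
  have hf : ∀ a b : L, f ⁅a, b⁆ = 0 := fun a b ↦
    LinearMap.mem_ker.mp (hfI (LieSubmodule.lie_mem_lie (LieSubmodule.mem_top a)
      (LieSubmodule.mem_top b)))
  obtain ⟨x, hx⟩ : ∃ x, f x ≠ 0 := not_forall.mp fun h ↦ hf0 (LinearMap.ext h)
  obtain ⟨d, hd, hdx⟩ := hDer.exists_mem_lie_top_of_surjective (LieDerivation.ad F L) had (LieDerivation.ad F L x)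
  have hz : x - d ∈ center F L := by
    rw [← LieDerivation.ad_ker_eq_center, LieHom.mem_ker, map_sub, hdx, sub_self]
  have hfz : f (x - d) ≠ 0 := by
    rwa [map_sub, LinearMap.mem_ker.mp (hfI hd), sub_zero]
  have h0 := smulRightOfCenter_mem_center had f hf hz
  rw [hZ, LieSubmodule.mem_bot] at h0
  rcases smul_eq_zero.mp (DFunLike.congr_fun h0 (x - d)) with h | h
  · exact hfz h
  · exact hfz (by rw [h, map_zero])

theorem isPerfect_of_isUniversal {R g : Type*} [CommRing R] [LieRing g] [LieAlgebra R g]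
    {ĝ : Type u} [LieRing ĝ] [LieAlgebra R ĝ] (hg : IsPerfect R g) (q : ĝ →ₗ⁅R⁆ g)
    (hqsurj : Function.Surjective q) (hqcent : q.ker ≤ center R ĝ)
    (huniv : ∀ (E : Type u) [LieRing E] [LieAlgebra R E] (π : E →ₗ⁅R⁆ g),
      Function.Surjective π → π.ker ≤ center R E → ∃! ψ : ĝ →ₗ⁅R⁆ E, π.comp ψ = q) :
    IsPerfect R ĝ := by
  set I : LieIdeal R ĝ := ⁅(⊤ : LieIdeal R ĝ), (⊤ : LieIdeal R ĝ)⁆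
  have hπsurj : Function.Surjective (q.comp I.incl) := fun y ↦ by
    obtain ⟨x, hx, rfl⟩ := hg.exists_mem_lie_top_of_surjective q hqsurj y
    exact ⟨⟨x, hx⟩, rfl⟩
  have hπcent : (q.comp I.incl).ker ≤ center R I := fun x hx ↦ by
    have hx' := hqcent (x := x) hx
    rw [LieModule.mem_maxTrivSubmodule] at hx' ⊢
    exact fun y ↦ Subtype.ext (hx' y)
  obtain ⟨ψ₀, hψ₀, -⟩ := huniv I _ hπsurj hπcent
  obtain ⟨_, -, huniq⟩ := huniv ĝ q hqsurj hqcent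
  have hsplit : I.incl.comp ψ₀ = LieHom.id :=
    (huniq _ (by ext x; exact congr($hψ₀ x))).trans (huniq LieHom.id (by ext; rfl)).symm
  exact eq_top_iff.mpr fun x _ ↦ (congr($hsplit x) : (ψ₀ x : ĝ) = x) ▸ (ψ₀ x).2

end LieAlgebra

/-- Let `L` be a Lie algebra over a field `F` with `Der(L)` simple.  Then, given a
universal central extension `q : ĝ → g` of the simple Lie algebra `g = Der(L)`, the
algebra `L` is isomorphic to `ĝ/C` for some central ideal `C` of `ĝ` such that every
derivation of `ĝ` preserving `C` is inner. -/
theorem stmt14 (F : Type u) [Field F] (L : Type u) [LieRing L] [LieAlgebra F L]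
    (hsimple : LieAlgebra.IsSimple F (LieDerivation F L L))
    (ghat : Type u) [LieRing ghat] [LieAlgebra F ghat]
    -- `q : ĝ → Der(L)` is a central extension
    (q : ghat →ₗ⁅F⁆ LieDerivation F L L) (hqsurj : Function.Surjective q)
    (hqcent : q.ker ≤ LieAlgebra.center F ghat)
    -- ... which is universal
    (huniv : ∀ (E : Type u) [LieRing E] [LieAlgebra F E]
        (π : E →ₗ⁅F⁆ LieDerivation F L L),
      Function.Surjective π → π.ker ≤ LieAlgebra.center F E →
        ∃! ψ : ghat →ₗ⁅F⁆ E, π.comp ψ = q) :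
    ∃ C : LieIdeal F ghat, C ≤ LieAlgebra.center F ghat ∧
      (∀ D : LieDerivation F ghat ghat, (∀ x ∈ C, D x ∈ C) →
        ∃ y : ghat, D = LieDerivation.ad F ghat y) ∧
      Nonempty (L ≃ₗ⁅F⁆ ghat ⧸ C) := by
  have := hsimple
  have hDer : IsPerfect F (LieDerivation F L L) := IsSimple.isPerfect
  have had : Function.Surjective (LieDerivation.ad F L) := ad_surjective_of_isSimple
  have hL : IsPerfect F L := isPerfect_of_ad_surjective had (center_eq_bot F _) hDer
  have hghat : IsPerfect F ghat := isPerfect_of_isUniversal hDer q hqsurj hqcent huniv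
  have hadcent := (LieDerivation.ad_ker_eq_center F L).le
  obtain ⟨ψ, hψ, -⟩ := huniv L (LieDerivation.ad F L) had hadcent
  have hψsurj : Function.Surjective ψ :=
    LieHom.surjective_of_isPerfect hL (LieDerivation.ad F L) hadcent ψ (hψ ▸ hqsurj)
  have hker : ψ.ker ≤ center F ghat := fun x hx ↦ hqcent <| by
    rw [LieHom.mem_ker, ← hψ, LieHom.comp_apply, LieHom.mem_ker.mp hx, map_zero]
  exact ⟨ψ.ker, hker, exists_eq_ad_of_ker_le_center hghat ψ hψsurj hker had,
    ⟨(ψ.quotKerEquivOfSurjective hψsurj).symm⟩⟩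
end

section
/- Let 0 → Ĉ → ĝ → g → 0 be a universal central extension of a centerless Lie algebra g. Then every derivation of g lifts uniquely to a derivation of ĝ, and the resulting map Der(g) → Der(ĝ) is an isomorphism of Lie algebras. -/
/-!
For `D ∈ Der(g)`, the elements `x + ε y` of the dual-number algebra `ĝ[ε]` with
`q y = D (q x)` form a central extension of `g`. By universality its structure map from `ĝ`
is `z ↦ z + ε D̂ z` for a derivation `D̂` lifting `D`: the first component is an endomorphism
of `ĝ` over `g`, hence the identity. Any lift `E` gives another such map `z ↦ z + ε E z`, so
lifts are unique. Uniqueness makes `D ↦ D̂` a Lie homomorphism; it is injective since `q` is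
onto, and surjective because a derivation of `ĝ` maps `ker q` into the centre of `ĝ`, whose
image is central in `g`, hence zero, so the derivation descends to `g`.
-/

open LieAlgebra LieModule.Cohomology

namespace LieAlgebra

/-- `L[ε] = L ⊗ R[ε]/(ε²)`, where `⟨(x, y)⟩` stands for `x + ε y`. -/
abbrev Tangent (R L : Type*) [CommRing R] [LieRing L] [LieAlgebra R L] : Type _ :=
  ofTwoCocycle (0 : twoCocycle R L L)

namespace Tangent

variable {R L : Type*} [CommRing R] [LieRing L] [LieAlgebra R L]

@[simp] lemma add_carrier (a b : Tangent R L) : (a + b).carrier = a.carrier + b.carrier := rfl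
@[simp] lemma smul_carrier (t : R) (a : Tangent R L) : (t • a).carrier = t • a.carrier := rfl
@[simp] lemma zero_carrier : (0 : Tangent R L).carrier = 0 := rfl

@[simp] lemma lie_carrier (a b : Tangent R L) :
    ⁅a, b⁆.carrier = (⁅a.carrier.1, b.carrier.1⁆,
      ⁅a.carrier.1, b.carrier.2⁆ + ⁅a.carrier.2, b.carrier.1⁆) := by
  rw [bracket_ofTwoCocycle]
  simp only [ZeroMemClass.coe_zero, LinearMap.zero_apply, zero_add, sub_eq_add_neg, lie_skew]
  rfl

def fst : Tangent R L →ₗ⁅R⁆ L where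
  toFun a := a.carrier.1
  map_add' _ _ := rfl
  map_smul' _ _ := rfl
  map_lie' := rfl

@[ext] lemma ext {a b : Tangent R L} (h₁ : a.carrier.1 = b.carrier.1)
    (h₂ : a.carrier.2 = b.carrier.2) : a = b := by
  obtain ⟨a⟩ := a
  obtain ⟨b⟩ := b
  simp_all [Prod.ext_iff]

end Tangent
end LieAlgebra

namespace LieDerivation

variable {R L : Type*} [CommRing R] [LieRing L] [LieAlgebra R L]

/-- Derivations `E` of `L` correspond to the Lie sections `z ↦ z + ε E z` of `L[ε] → L`. -/
def toTangent (E : LieDerivation R L L) : L →ₗ⁅R⁆ Tangent R L where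
  toFun z := ⟨(z, E z)⟩
  map_add' a b := by ext <;> simp
  map_smul' t a := by ext <;> simp
  map_lie' {a b} := by
    ext
    · rfl
    · rw [Tangent.lie_carrier]
      exact E.apply_lie_eq_add a b

def ofTangent (σ : L →ₗ⁅R⁆ Tangent R L) (hσ : ∀ z, (σ z).carrier.1 = z) :
    LieDerivation R L L where
  toFun z := (σ z).carrier.2
  map_add' a b := congrArg (·.carrier.2) (map_add σ a b)
  map_smul' t a := congrArg (·.carrier.2) (map_smul σ t a)
  leibniz' a b := by
    show (σ ⁅a, b⁆).carrier.2 = ⁅a, (σ b).carrier.2⁆ - ⁅b, (σ a).carrier.2⁆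
    simp only [LieHom.map_lie, Tangent.lie_carrier, hσ, ← lie_skew b (σ a).carrier.2]
    abel

end LieDerivation

namespace LieHom

variable {R L M : Type*} [CommRing R] [LieRing L] [LieAlgebra R L] [LieRing M] [LieAlgebra R M]
  (q : L →ₗ⁅R⁆ M)

/-- The pullback of `q[ε] : L[ε] → M[ε]` along `id + ε D : M → M[ε]`. -/
def derivationPullback (D : LieDerivation R M M) : LieSubalgebra R (Tangent R L) where
  carrier := {a | q a.carrier.2 = D (q a.carrier.1)}
  add_mem' {a b} ha hb := by simp_all
  zero_mem' := by simp
  smul_mem' t a ha := by simp_all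
  lie_mem' {a b} ha hb := by
    simp only [Set.mem_ofPred_eq, Tangent.lie_carrier, map_add, LieHom.map_lie] at *
    rw [ha, hb, D.apply_lie_eq_add]

variable {q} {D : LieDerivation R M M}

lemma mem_derivationPullback {a : Tangent R L} :
    a ∈ q.derivationPullback D ↔ q a.carrier.2 = D (q a.carrier.1) := Iff.rfl

variable (q D) in
def derivationPullbackProj : q.derivationPullback D →ₗ⁅R⁆ M :=
  q.comp (Tangent.fst.comp (q.derivationPullback D).incl)

lemma derivationPullbackProj_surjective (hq : Function.Surjective q) :
    Function.Surjective (q.derivationPullbackProj D) := by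
  intro u
  obtain ⟨x, rfl⟩ := hq u
  obtain ⟨y, hy⟩ := hq (D (q x))
  exact ⟨⟨⟨(x, y)⟩, hy⟩, rfl⟩

lemma ker_derivationPullbackProj_le_center (hker : q.ker ≤ center R L) :
    (q.derivationPullbackProj D).ker ≤ center R (q.derivationPullback D) := by
  rintro ⟨a, ha⟩ h
  have h₀ : q a.carrier.1 = 0 := h
  have h₁ : a.carrier.1 ∈ center R L := hker h₀
  have h₂ : a.carrier.2 ∈ center R L := by
    refine hker ?_
    rw [LieHom.mem_ker, mem_derivationPullback.mp ha, h₀, map_zero]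
  rw [LieModule.mem_maxTrivSubmodule] at h₁ h₂ ⊢
  intro b
  ext <;> simp [h₁, h₂]

def _root_.LieDerivation.toDerivationPullback (E : LieDerivation R L L)
    (hE : ∀ x, q (E x) = D (q x)) : L →ₗ⁅R⁆ q.derivationPullback D where
  toFun z := ⟨E.toTangent z, hE z⟩
  map_add' a b := Subtype.ext (map_add E.toTangent a b)
  map_smul' t a := Subtype.ext (map_smul E.toTangent t a)
  map_lie' {a b} := Subtype.ext (E.toTangent.map_lie a b)

end LieHom

structure LieHom.IsUniversalCentralExtension {R : Type*} {L : Type u} {M : Type*} [CommRing R]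
    [LieRing L] [LieAlgebra R L] [LieRing M] [LieAlgebra R M] (q : L →ₗ⁅R⁆ M) : Prop where
  surjective : Function.Surjective q
  ker_le_center : q.ker ≤ center R L
  existsUnique (E : Type u) [LieRing E] [LieAlgebra R E] (π : E →ₗ⁅R⁆ M) :
    Function.Surjective π → π.ker ≤ center R E → ∃! ψ : L →ₗ⁅R⁆ E, π.comp ψ = q

namespace LieHom.IsUniversalCentralExtension

variable {R : Type*} {L : Type u} {M : Type*} [CommRing R] [LieRing L] [LieAlgebra R L]
  [LieRing M] [LieAlgebra R M] {q : L →ₗ⁅R⁆ M}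

lemma eq_id (hq : q.IsUniversalCentralExtension) {φ : L →ₗ⁅R⁆ L} (hφ : q.comp φ = q) :
    φ = LieHom.id :=
  (hq.existsUnique L q hq.surjective hq.ker_le_center).unique hφ q.comp_id

theorem existsUnique_derivation_lift (hq : q.IsUniversalCentralExtension)
    (D : LieDerivation R M M) : ∃! E : LieDerivation R L L, ∀ x, q (E x) = D (q x) := by
  obtain ⟨ψ, hψ, hψ_unique⟩ := hq.existsUnique _ (q.derivationPullbackProj D)
    (derivationPullbackProj_surjective hq.surjective)
    (ker_derivationPullbackProj_le_center hq.ker_le_center)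
  set σ := (q.derivationPullback D).incl.comp ψ
  have hσ : ∀ z, (σ z).carrier.1 = z :=
    LieHom.congr_fun (hq.eq_id (φ := Tangent.fst.comp σ) hψ)
  refine ⟨LieDerivation.ofTangent σ hσ, fun x => ?_, ?_⟩
  · calc q (σ x).carrier.2 = D (q (σ x).carrier.1) := mem_derivationPullback.mp (ψ x).2
      _ = D (q x) := by rw [hσ]
  · intro E hE
    have h : LieDerivation.toDerivationPullback E hE = ψ := hψ_unique _ rfl
    subst h
    rfl

end LieHom.IsUniversalCentralExtension

namespace LinearMap

variable {R V W U : Type*} [CommRing R] [AddCommGroup V] [Module R V] [AddCommGroup W]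
  [Module R W] [AddCommGroup U] [Module R U]

noncomputable def descend (f : V →ₗ[R] W) (hf : Function.Surjective f) (φ : V →ₗ[R] U)
    (h : ker f ≤ ker φ) : W →ₗ[R] U :=
  (ker f).liftQ φ h ∘ₗ (f.quotKerEquivOfSurjective hf).symm

@[simp] lemma descend_apply (f : V →ₗ[R] W) (hf : Function.Surjective f) (φ : V →ₗ[R] U)
    (h : ker f ≤ ker φ) (x : V) : f.descend hf φ h (f x) = φ x :=
  congrArg ((ker f).liftQ φ h) (f.quotKerEquivOfSurjective_symm_apply hf x)

end LinearMap

lemma LieHom.map_mem_center {R L M : Type*} [CommRing R] [LieRing L] [LieAlgebra R L] [LieRing M]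
    [LieAlgebra R M] (q : L →ₗ⁅R⁆ M) (hq : Function.Surjective q) {z : L}
    (hz : z ∈ center R L) : q z ∈ center R M := by
  rw [LieModule.mem_maxTrivSubmodule] at hz ⊢
  intro u
  obtain ⟨w, rfl⟩ := hq u
  rw [← LieHom.map_lie, hz, map_zero]

namespace LieDerivation

variable {R L M : Type*} [CommRing R] [LieRing L] [LieAlgebra R L] [LieRing M] [LieAlgebra R M]
  {q : L →ₗ⁅R⁆ M}

lemma apply_mem_center (E : LieDerivation R L L) {z : L} (hz : z ∈ center R L) :
    E z ∈ center R L := by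
  rw [LieModule.mem_maxTrivSubmodule] at hz ⊢
  intro w
  have h := E.apply_lie_eq_add w z
  rw [hz w, map_zero, hz, add_zero] at h
  exact h.symm

noncomputable def descend (E : LieDerivation R L L) (hq : Function.Surjective q)
    (hE : ∀ z, q z = 0 → q (E z) = 0) : LieDerivation R M M where
  toLinearMap := (q : L →ₗ[R] M).descend hq ((q : L →ₗ[R] M) ∘ₗ (E : L →ₗ[R] L))
    fun z hz => LinearMap.mem_ker.mpr (hE z (LinearMap.mem_ker.mp hz))
  leibniz' a b := by
    obtain ⟨x, rfl⟩ := hq a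
    obtain ⟨y, rfl⟩ := hq b
    rw [← LieHom.map_lie]
    simp only [← LieHom.coe_toLinearMap, LinearMap.descend_apply]
    simp [E.apply_lie_eq_sub]

lemma descend_apply (E : LieDerivation R L L) (hq : Function.Surjective q)
    (hE : ∀ z, q z = 0 → q (E z) = 0) (x : L) : E.descend hq hE (q x) = q (E x) :=
  LinearMap.descend_apply _ hq ((q : L →ₗ[R] M) ∘ₗ (E : L →ₗ[R] L)) hE x

end LieDerivation

namespace LieHom

variable {R L M : Type*} [CommRing R] [LieRing L] [LieAlgebra R L] [LieRing M] [LieAlgebra R M]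
  {q : L →ₗ⁅R⁆ M}
  (hlift : ∀ D : LieDerivation R M M, ∃! E : LieDerivation R L L, ∀ x, q (E x) = D (q x))

noncomputable def derivationLift (D : LieDerivation R M M) : LieDerivation R L L :=
  (hlift D).exists.choose

lemma apply_derivationLift (D : LieDerivation R M M) (x : L) :
    q (derivationLift hlift D x) = D (q x) :=
  (hlift D).exists.choose_spec x

lemma eq_derivationLift {D : LieDerivation R M M} {E : LieDerivation R L L}
    (hE : ∀ x, q (E x) = D (q x)) : E = derivationLift hlift D :=
  (hlift D).unique hE (apply_derivationLift hlift D)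

noncomputable def derivationLiftHom : LieDerivation R M M →ₗ⁅R⁆ LieDerivation R L L where
  toFun := derivationLift hlift
  map_add' D D' := (eq_derivationLift hlift fun x => by simp [apply_derivationLift]).symm
  map_smul' t D := (eq_derivationLift hlift fun x => by simp [apply_derivationLift]).symm
  map_lie' {D D'} := (eq_derivationLift hlift fun x => by simp [apply_derivationLift]).symm

lemma derivationLiftHom_injective (hq : Function.Surjective q) :
    Function.Injective (derivationLiftHom hlift) := by
  intro D D' h
  ext u
  obtain ⟨x, rfl⟩ := hq u
  rw [← apply_derivationLift hlift D, ← apply_derivationLift hlift D']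
  exact congrArg (fun E : LieDerivation R L L => q (E x)) h

lemma derivationLiftHom_surjective (hq : Function.Surjective q) (hker : q.ker ≤ center R L)
    (hM : center R M = ⊥) : Function.Surjective (derivationLiftHom hlift) := by
  intro E
  have hE : ∀ z, q z = 0 → q (E z) = 0 := by
    intro z hz
    have h := q.map_mem_center hq (E.apply_mem_center (hker hz))
    rwa [hM, LieSubmodule.mem_bot] at h
  exact ⟨E.descend hq hE,
    (eq_derivationLift hlift fun x => (E.descend_apply hq hE x).symm).symm⟩

noncomputable def derivationLiftEquiv (hq : Function.Surjective q) (hker : q.ker ≤ center R L)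
    (hM : center R M = ⊥) : LieDerivation R M M ≃ₗ⁅R⁆ LieDerivation R L L :=
  LieEquiv.ofBijective (derivationLiftHom hlift)
    ⟨derivationLiftHom_injective hlift hq, derivationLiftHom_surjective hlift hq hker hM⟩

end LieHom

/-- Let `0 → Ĉ → ĝ → g → 0` be a universal central extension of a centerless Lie algebra
`g`.  Then every derivation of `g` lifts uniquely to a derivation of `ĝ`, and the
resulting map `Der(g) → Der(ĝ)` is an isomorphism of Lie algebras. -/
theorem stmt17 (F : Type u) [Field F]
    (g ghat : Type u) [LieRing g] [LieAlgebra F g] [LieRing ghat] [LieAlgebra F ghat]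
    -- `g` is centerless
    (hcenterg : LieAlgebra.center F g = ⊥)
    -- `q : ĝ → g` is a central extension
    (q : ghat →ₗ⁅F⁆ g) (hqsurj : Function.Surjective q)
    (hqcent : q.ker ≤ LieAlgebra.center F ghat)
    -- ... which is universal
    (huniv : ∀ (E : Type u) [LieRing E] [LieAlgebra F E] (π : E →ₗ⁅F⁆ g),
      Function.Surjective π → π.ker ≤ LieAlgebra.center F E →
        ∃! ψ : ghat →ₗ⁅F⁆ E, π.comp ψ = q) :
    (∀ D : LieDerivation F g g, ∃! Dhat : LieDerivation F ghat ghat,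
        ∀ x : ghat, q (Dhat x) = D (q x)) ∧
      ∃ Φ : LieDerivation F g g ≃ₗ⁅F⁆ LieDerivation F ghat ghat,
        ∀ (D : LieDerivation F g g) (x : ghat), q ((Φ D) x) = D (q x) := by
  have hq : q.IsUniversalCentralExtension := ⟨hqsurj, hqcent, huniv⟩
  have hlift := hq.existsUnique_derivation_lift
  exact ⟨hlift, LieHom.derivationLiftEquiv hlift hqsurj hqcent hcenterg,
    LieHom.apply_derivationLift hlift⟩
end
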